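/- arXiv:1911.06346 — 5 statements merged into one kernel-verified Lean document; each statement's English description precedes it below -/
import Mathlib

section
/- The relation on eventually periodic streams of natural numbers defined by: s ~ t if for some (equivalently, any) representations s = s₀ s₁^ω and t = t₀ t₁^ω with periodic parts s₁ of length p and t₁ of length q, one has q · (sum of entries of s₁) = p · (sum of entries of t₁), is well-defined, i.e., independent of the chosen representations. -/
/-- `IsRep s s₀ s₁` says the stream `s : ℕ → ℕ` is represented as `s = s₀ s₁^ω`,
i.e. `s₁` is a nonempty period repeated forever after the finite prefix `s₀`
(the values of the prefix are those of `s`, so only the tail condition matters). -/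
def IsRep (s : ℕ → ℕ) (s₀ s₁ : List ℕ) : Prop :=
  s₁ ≠ [] ∧ ∀ n : ℕ, s (s₀.length + n) = s₁.getD (n % s₁.length) 0

lemma shift_sum (f : ℕ → ℕ) (p : ℕ) (m : ℕ) :
    ∑ i ∈ Finset.range p, f ((m + i) % p) = ∑ i ∈ Finset.range p, f (i % p) := by
  induction m with
  | zero => simp
  | succ m ih =>
    rw [← ih]
    have A := Finset.sum_range_succ' (fun i => f ((m + i) % p)) p
    have B := Finset.sum_range_succ (fun i => f ((m + i) % p)) p
    have hmp : (m + p) % p = (m + 0) % p := by simp [Nat.add_mod_right]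
    have key : (∑ i ∈ Finset.range p, f ((m + (i + 1)) % p)) + f ((m + 0) % p)
        = (∑ i ∈ Finset.range p, f ((m + i) % p)) + f ((m + 0) % p) := by
      rw [← A, B, hmp]
    have := Nat.add_right_cancel key
    calc ∑ i ∈ Finset.range p, f ((m + 1 + i) % p)
        = ∑ i ∈ Finset.range p, f ((m + (i + 1)) % p) := by
          apply Finset.sum_congr rfl; intro i _; ring_nf
      _ = ∑ i ∈ Finset.range p, f ((m + i) % p) := this

lemma getD_sum (l : List ℕ) : ∑ i ∈ Finset.range l.length, l.getD i 0 = l.sum := by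
  induction l with
  | nil => simp
  | cons a l ih =>
    rw [List.length_cons, Finset.sum_range_succ' (fun i => (a :: l).getD i 0) l.length]
    simp only [List.getD_cons_succ, List.getD_cons_zero, ih, List.sum_cons]
    omega

lemma rep_sum (s : ℕ → ℕ) (s₀ s₁ : List ℕ) (h : IsRep s s₀ s₁) (N : ℕ)
    (hN : s₀.length ≤ N) (k : ℕ) :
    ∑ i ∈ Finset.range (k * s₁.length), s (N + i) = k * s₁.sum := by
  obtain ⟨hne, hper⟩ := h
  have hp : 0 < s₁.length := List.length_pos_iff.mpr hne
  obtain ⟨m, rfl⟩ := Nat.exists_eq_add_of_le hN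
  induction k with
  | zero => simp
  | succ k ih =>
    rw [Nat.succ_mul, Finset.sum_range_add, ih, Nat.succ_mul]
    congr 1
    have step : ∀ i, s (s₀.length + m + (k * s₁.length + i))
        = s₁.getD ((m + i) % s₁.length) 0 := by
      intro i
      have h1 : s₀.length + m + (k * s₁.length + i) = s₀.length + (m + (k * s₁.length + i)) := by ring
      rw [h1, hper]
      congr 1
      have : m + (k * s₁.length + i) = (m + i) + k * s₁.length := by ring
      rw [this, Nat.add_mul_mod_self_right]
    calc ∑ i ∈ Finset.range s₁.length, s (s₀.length + m + (k * s₁.length + i))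
        = ∑ i ∈ Finset.range s₁.length, s₁.getD ((m + i) % s₁.length) 0 := by
          exact Finset.sum_congr rfl fun i _ => step i
      _ = ∑ i ∈ Finset.range s₁.length, s₁.getD (i % s₁.length) 0 :=
          shift_sum (fun j => s₁.getD j 0) s₁.length m
      _ = ∑ i ∈ Finset.range s₁.length, s₁.getD i 0 := by
          exact Finset.sum_congr rfl fun i hi => by
            rw [Nat.mod_eq_of_lt (Finset.mem_range.mp hi)]
      _ = s₁.sum := getD_sum s₁

lemma mean_eq (s : ℕ → ℕ) (s₀ s₁ s₀' s₁' : List ℕ)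
    (hs : IsRep s s₀ s₁) (hs' : IsRep s s₀' s₁') :
    s₁'.length * s₁.sum = s₁.length * s₁'.sum := by
  have h1 := rep_sum s s₀ s₁ hs (max s₀.length s₀'.length) (le_max_left _ _) s₁'.length
  have h2 := rep_sum s s₀' s₁' hs' (max s₀.length s₀'.length) (le_max_right _ _) s₁.length
  rw [mul_comm s₁.length s₁'.length] at h2
  exact h1.symm.trans h2

lemma alg_dir (p p' q q' S S' T T' : ℕ) (hp : 0 < p) (hq : 0 < q)
    (hS : p' * S = p * S') (hT : q' * T = q * T') (h : q * S = p * T) :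
    q' * S' = p' * T' := by
  have key : (p * q) * (q' * S') = (p * q) * (p' * T') := by
    calc (p * q) * (q' * S') = (q * q') * (p * S') := by ring
      _ = (q * q') * (p' * S) := by rw [hS]
      _ = (p' * q') * (q * S) := by ring
      _ = (p' * q') * (p * T) := by rw [h]
      _ = (p' * p) * (q' * T) := by ring
      _ = (p' * p) * (q * T') := by rw [hT]
      _ = (p * q) * (p' * T') := by ring
  exact Nat.eq_of_mul_eq_mul_left (Nat.mul_pos hp hq) key

/-- The equivalence of eventually periodic streams (equality of the arithmetic means of
the periodic parts) is well defined: it does not depend on the chosen representations. -/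
theorem eventuallyPeriodic_equiv_wellDefined
    (s t : ℕ → ℕ) (s₀ s₁ s₀' s₁' t₀ t₁ t₀' t₁' : List ℕ)
    (hs : IsRep s s₀ s₁) (hs' : IsRep s s₀' s₁')
    (ht : IsRep t t₀ t₁) (ht' : IsRep t t₀' t₁') :
    (t₁.length * s₁.sum = s₁.length * t₁.sum) ↔
      (t₁'.length * s₁'.sum = s₁'.length * t₁'.sum) := by
  have hS := mean_eq s s₀ s₁ s₀' s₁' hs hs'
  have hT := mean_eq t t₀ t₁ t₀' t₁' ht ht'
  have hp : 0 < s₁.length := List.length_pos_iff.mpr hs.1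
  have hp' : 0 < s₁'.length := List.length_pos_iff.mpr hs'.1
  have hq : 0 < t₁.length := List.length_pos_iff.mpr ht.1
  have hq' : 0 < t₁'.length := List.length_pos_iff.mpr ht'.1
  constructor
  · exact alg_dir _ _ _ _ _ _ _ _ hp hq hS hT
  · exact alg_dir _ _ _ _ _ _ _ _ hp' hq' hS.symm hT.symm
end

section
/- Let X, Y be finite sets and consider ℕ-actions: TX = ℕ × X with u(n,x) = (n+1,x). Let γ_X : ℕ × X → ℕ × X and γ_Y : ℕ × Y → ℕ × Y be equivariant maps (i.e., commuting with u), and let h : ℕ × X → ℕ × Y be equivariant with h ∘ γ_X = γ_Y ∘ h. If h(m,x) = (n,y), then the streams of increments generated by (m,x) under γ_X and by (n,y) under γ_Y are equivalent: writing (m_j, x_j) = γ_X^j(m,x) and (n_j, y_j) = γ_Y^j(n,y), for any k ≥ 0 and p > 0 with x_k = x_{k+p} one has y_k = y_{k+p} and m_{k+p} − m_k = n_{k+p} − n_k. -/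
/-- A map `γ : ℕ × X → ℕ × X` is equivariant for the unary operation
`u (n, x) = (n + 1, x)` of the free algebra `TX = ℕ × X`. -/
def Equivariant {X Y : Type*} (γ : ℕ × X → ℕ × Y) : Prop :=
  ∀ (n : ℕ) (x : X), γ (n + 1, x) = ((γ (n, x)).1 + 1, (γ (n, x)).2)

lemma equivariant_shift {X Y : Type*} {γ : ℕ × X → ℕ × Y} (hγ : Equivariant γ)
    (n : ℕ) (x : X) : γ (n, x) = (n + (γ (0, x)).1, (γ (0, x)).2) := by
  induction n with
  | zero => simp
  | succ n ih => rw [hγ, ih]; simp; ring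

/-- Coalgebra homomorphisms of ffg-coalgebras for the identity functor on algebras with
one unary operation preserve the equivalence class of the generated streams: if
`h (m, x) = (n, y)` then, writing `(m_j, x_j) = γ_X^j (m, x)` and `(n_j, y_j) = γ_Y^j (n, y)`,
for any `k ≥ 0`, `p > 0` with `x_k = x_{k+p}` one has `y_k = y_{k+p}` and
`m_{k+p} − m_k = n_{k+p} − n_k`. -/
theorem homomorphism_preserves_stream_equivalence
    {X Y : Type*} [Fintype X] [Fintype Y]
    (γX : ℕ × X → ℕ × X) (γY : ℕ × Y → ℕ × Y) (h : ℕ × X → ℕ × Y)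
    (hγX : Equivariant γX) (hγY : Equivariant γY) (hh : Equivariant h)
    (hcomm : ∀ q, h (γX q) = γY (h q))
    (m : ℕ) (x : X) (n : ℕ) (y : Y) (hxy : h (m, x) = (n, y))
    (k p : ℕ) (hp : 0 < p)
    (hxk : (γX^[k] (m, x)).2 = (γX^[k + p] (m, x)).2) :
    (γY^[k] (n, y)).2 = (γY^[k + p] (n, y)).2 ∧
      (γX^[k + p] (m, x)).1 - (γX^[k] (m, x)).1 =
        (γY^[k + p] (n, y)).1 - (γY^[k] (n, y)).1 := by
  have key : ∀ j, γY^[j] (n, y) = h (γX^[j] (m, x)) := by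
    intro j
    induction j with
    | zero => simp [hxy]
    | succ j ih =>
      rw [Function.iterate_succ_apply', Function.iterate_succ_apply', ih, hcomm]
  have hval : ∀ j, h (γX^[j] (m, x)) =
      ((γX^[j] (m, x)).1 + (h (0, (γX^[j] (m, x)).2)).1,
        (h (0, (γX^[j] (m, x)).2)).2) := by
    intro j
    rw [← equivariant_shift hh]
  constructor
  · rw [key, key, hval, hval, hxk]
  · rw [key, key, hval, hval, hxk]
    omega
end

section
/- In a category with binary coproducts and an endofunctor F, for morphisms e : X → FX + Y, f : Y → FY + Z, g : Z → FZ + V, one has (e ▫ f) ▫ g = (inl • e) ▫ (f ▫ g) as morphisms X + Y + Z → F(X + Y + Z) + V (modulo the associativity isomorphism of coproducts). -/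
open CategoryTheory CategoryTheory.Limits

variable {C : Type*} [Category C] [HasBinaryCoproducts C]

/-- `h • e`, renaming of parameters in an equation morphism. -/
noncomputable def bullet (F : C ⥤ C) {X A B : C} (e : X ⟶ F.obj X ⨿ A) (h : A ⟶ B) :
    X ⟶ F.obj X ⨿ B :=
  e ≫ coprod.map (𝟙 (F.obj X)) h

/-- `e ▫ f`, the combination of two equation morphisms. -/
noncomputable def square (F : C ⥤ C) {X Y Z : C} (e : X ⟶ F.obj X ⨿ Y) (f : Y ⟶ F.obj Y ⨿ Z) :
    X ⨿ Y ⟶ F.obj (X ⨿ Y) ⨿ Z :=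
  coprod.desc e coprod.inr ≫ coprod.map (𝟙 (F.obj X)) f ≫
    coprod.desc (F.map coprod.inl ≫ coprod.inl) (coprod.map (F.map coprod.inr) (𝟙 Z))

/-- `(e ▫ f) ▫ g = (inl • e) ▫ (f ▫ g)` modulo the associativity isomorphism of coproducts. -/
theorem square_assoc (F : C ⥤ C) {X Y Z V : C}
    (e : X ⟶ F.obj X ⨿ Y) (f : Y ⟶ F.obj Y ⨿ Z) (g : Z ⟶ F.obj Z ⨿ V) :
    square F (square F e f) g =
      (coprod.associator X Y Z).hom ≫
        square F (bullet F e (coprod.inl : Y ⟶ Y ⨿ Z)) (square F f g) ≫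
          coprod.map (F.map (coprod.associator X Y Z).inv) (𝟙 V) := by
  simp only [square, bullet, coprod.associator]
  ext <;> simp <;> simp only [← Functor.map_comp, ← Functor.map_comp_assoc, coprod.inl_desc,
    coprod.inr_desc, coprod.inl_desc_assoc, coprod.inr_desc_assoc, Category.assoc]
end

section
/- For a finitary endofunctor F on a locally finitely presentable category, any solution operator satisfying Weak Functoriality also satisfies (full) Functoriality: given fp-equations e : X → FX + A and f : Y → FY + A and a coalgebra homomorphism m : (X, e) → (Y, f) for the functor F(−) + A, one has e† = f† ∘ m. -/
/-!
Write `A` as a filtered colimit of fp objects `D j`. Since `X` and `Y` are finitely presentable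
and `W ⨿ -` preserves filtered (indeed connected) colimits, the equations `e`, `f` and the
homomorphism equation between them all descend to a single stage `D k`.
Weak Functoriality at that stage, with `h` the colimit injection `D k ⟶ A`, is Functoriality.
-/

open CategoryTheory CategoryTheory.Limits Opposite

universe v u

variable {C : Type u} [Category.{v} C]

/-- An object is finitely presentable (fp) if its hom-functor preserves filtered colimits. -/
def IsFP (X : C) : Prop :=
  ∀ (J : Type v) (_ : SmallCategory J), IsFiltered J →
    Nonempty (PreservesColimitsOfShape J (coyoneda.obj (op X)))

-- `W ⨿ -` is a left adjoint into `Under W` followed by the forgetful functor.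
instance preservesColimitsOfShape_coprod_functor_obj [HasBinaryCoproducts C]
    {J : Type*} [Category J] [IsConnected J] (W : C) :
    PreservesColimitsOfShape J (coprod.functor.obj W) :=
  preservesColimitsOfShape_of_natIso (F := Under.costar W ⋙ Under.forget W) (Iso.refl _)

namespace IsFP

variable {J : Type v} [SmallCategory J] [IsFiltered J] {X : C}

lemma preservesColimit (hX : IsFP X) (D : J ⥤ C) : PreservesColimit D (coyoneda.obj (op X)) :=
  have := (hX J inferInstance inferInstance).some
  inferInstance

variable [HasBinaryCoproducts C] {D : J ⥤ C} {K : Cocone D}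

lemma exists_factor_coprod (hX : IsFP X) (hK : IsColimit K) {W : C} (φ : X ⟶ W ⨿ K.pt) :
    ∃ (j : J) (φ₀ : X ⟶ W ⨿ D.obj j), φ₀ ≫ coprod.map (𝟙 W) (K.ι.app j) = φ :=
  have := IsFiltered.isConnected J
  have := hX.preservesColimit (D ⋙ coprod.functor.obj W)
  exists_hom_of_preservesColimit_coyoneda (isColimitOfPreserves (coprod.functor.obj W) hK) φ

lemma exists_eq_coprod (hX : IsFP X) (hK : IsColimit K) {W : C} {i j : J}
    (φ : X ⟶ W ⨿ D.obj i) (ψ : X ⟶ W ⨿ D.obj j)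
    (h : φ ≫ coprod.map (𝟙 W) (K.ι.app i) = ψ ≫ coprod.map (𝟙 W) (K.ι.app j)) :
    ∃ (k : J) (u : i ⟶ k) (v : j ⟶ k),
      φ ≫ coprod.map (𝟙 W) (D.map u) = ψ ≫ coprod.map (𝟙 W) (D.map v) :=
  have := IsFiltered.isConnected J
  have := hX.preservesColimit (D ⋙ coprod.functor.obj W)
  exists_eq_of_preservesColimit_coyoneda (isColimitOfPreserves (coprod.functor.obj W) hK) φ ψ h

lemma exists_stage_of_coalgebra_hom (hX : IsFP X) {Y : C} (hY : IsFP Y) (hK : IsColimit K)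
    {P Q : C} (p : P ⟶ Q) (e : X ⟶ P ⨿ K.pt) (f : Y ⟶ Q ⨿ K.pt) (m : X ⟶ Y)
    (hm : e ≫ coprod.map p (𝟙 K.pt) = m ≫ f) :
    ∃ (k : J) (e₁ : X ⟶ P ⨿ D.obj k) (f₁ : Y ⟶ Q ⨿ D.obj k),
      e₁ ≫ coprod.map (𝟙 P) (K.ι.app k) = e ∧ f₁ ≫ coprod.map (𝟙 Q) (K.ι.app k) = f ∧
        e₁ ≫ coprod.map p (𝟙 (D.obj k)) = m ≫ f₁ := by
  obtain ⟨i, e₀, rfl⟩ := hX.exists_factor_coprod hK e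
  obtain ⟨j, f₀, rfl⟩ := hY.exists_factor_coprod hK f
  obtain ⟨k, u, v, huv⟩ := hX.exists_eq_coprod hK (e₀ ≫ coprod.map p (𝟙 _)) (m ≫ f₀)
    (by simpa [coprod.map_map] using hm)
  refine ⟨k, e₀ ≫ coprod.map (𝟙 P) (D.map u), f₀ ≫ coprod.map (𝟙 Q) (D.map v), ?_, ?_, ?_⟩
  · simp [coprod.map_map]
  · simp [coprod.map_map]
  · simpa [coprod.map_map] using huv

end IsFP

theorem weakFunctoriality_implies_functoriality_general
    [HasBinaryCoproducts C]
    (F : C ⥤ C)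
    -- C is locally finitely presentable: every object is a filtered colimit of fp objects
    (hlfp : ∀ A : C, ∃ (J : Type v) (_ : SmallCategory J) (_ : IsFiltered J)
      (D : J ⥤ C) (K : Cocone D), Nonempty (IsColimit K) ∧ K.pt = A ∧
        ∀ j, IsFP (D.obj j))
    -- a solution operator assigning to each fp-equation a morphism
    (sol : ∀ ⦃X A : C⦄, IsFP X → (X ⟶ F.obj X ⨿ A) → (X ⟶ A))
    -- Weak Functoriality
    (hweak : ∀ {X Y Z A : C} (hX : IsFP X) (hY : IsFP Y), IsFP Z →
      ∀ (e : X ⟶ F.obj X ⨿ Z) (f : Y ⟶ F.obj Y ⨿ Z) (m : X ⟶ Y),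
        e ≫ coprod.map (F.map m) (𝟙 Z) = m ≫ f →
        ∀ h : Z ⟶ A,
          sol hX (e ≫ coprod.map (𝟙 (F.obj X)) h) =
            m ≫ sol hY (f ≫ coprod.map (𝟙 (F.obj Y)) h)) :
    -- Functoriality
    ∀ {X Y A : C} (hX : IsFP X) (hY : IsFP Y)
      (e : X ⟶ F.obj X ⨿ A) (f : Y ⟶ F.obj Y ⨿ A) (m : X ⟶ Y),
      e ≫ coprod.map (F.map m) (𝟙 A) = m ≫ f →
      sol hX e = m ≫ sol hY f := by
  intro X Y A hX hY e f m hm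
  obtain ⟨J, _, _, D, K, ⟨hK⟩, rfl, hD⟩ := hlfp A
  obtain ⟨k, e₁, f₁, rfl, rfl, hm₁⟩ := hX.exists_stage_of_coalgebra_hom hY hK (F.map m) e f m hm
  exact hweak hX hY (hD k) e₁ f₁ m hm₁ (K.ι.app k)

/-- For a finitary endofunctor on a locally finitely presentable category, a solution
operator satisfying Weak Functoriality also satisfies full Functoriality. -/
theorem weakFunctoriality_implies_functoriality
    [HasBinaryCoproducts C] [HasColimitsOfSize.{v, v} C]
    (F : C ⥤ C) [PreservesFilteredColimits F]
    -- C is locally finitely presentable: every object is a filtered colimit of fp objects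
    (hlfp : ∀ A : C, ∃ (J : Type v) (_ : SmallCategory J) (_ : IsFiltered J)
      (D : J ⥤ C) (K : Cocone D), Nonempty (IsColimit K) ∧ K.pt = A ∧
        ∀ j, IsFP (D.obj j))
    -- a solution operator assigning to each fp-equation a morphism
    (sol : ∀ ⦃X A : C⦄, IsFP X → (X ⟶ F.obj X ⨿ A) → (X ⟶ A))
    -- Weak Functoriality
    (hweak : ∀ {X Y Z A : C} (hX : IsFP X) (hY : IsFP Y), IsFP Z →
      ∀ (e : X ⟶ F.obj X ⨿ Z) (f : Y ⟶ F.obj Y ⨿ Z) (m : X ⟶ Y),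
        e ≫ coprod.map (F.map m) (𝟙 Z) = m ≫ f →
        ∀ h : Z ⟶ A,
          sol hX (e ≫ coprod.map (𝟙 (F.obj X)) h) =
            m ≫ sol hY (f ≫ coprod.map (𝟙 (F.obj Y)) h)) :
    -- Functoriality
    ∀ {X Y A : C} (hX : IsFP X) (hY : IsFP Y)
      (e : X ⟶ F.obj X ⨿ A) (f : Y ⟶ F.obj Y ⨿ A) (m : X ⟶ Y),
      e ≫ coprod.map (F.map m) (𝟙 A) = m ≫ f →
      sol hX e = m ≫ sol hY f :=
  weakFunctoriality_implies_functoriality_general F hlfp sol hweak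
end

section
/- Let C be a category of Eilenberg–Moore algebras for a finitary monad T on Set and F an endofunctor on C. The inclusion of the category of F-coalgebras carried by free finitely generated objects into the category of F-coalgebras carried by perfectly presentable objects (split quotients of ffg objects) is cofinal. In particular: (1) every F-coalgebra (X, c) with X a split quotient of an ffg object W (via e : W ↠ X, m : X ↣ W, e∘m = id) admits a coalgebra homomorphism m : (X, c) → (W, w) into the ffg-coalgebra w := Fm ∘ c ∘ e, and (2) e : (W, w) → (X, c) is also a coalgebra homomorphism, so any span of homomorphisms from (X, c) into ffg-coalgebras is connected by a zig-zag through (W, w). -/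
open CategoryTheory CategoryTheory.Limits

universe v u

variable {C : Type u} [Category.{v} C]

/-- An object is perfectly presentable iff it is a split quotient of an object
satisfying `FFG` (being free finitely generated). -/
def PerfectlyPresentable (FFG : C → Prop) (X : C) : Prop :=
  ∃ (W : C) (e : W ⟶ X) (m : X ⟶ W), FFG W ∧ m ≫ e = 𝟙 X

/-!
A coalgebra `(X, c)` whose carrier splits as `m ≫ e = 𝟙 X` through an ffg object `W` is a retract,
in the category of coalgebras, of `(W, e ≫ c ≫ F.map m)`: both `m` and `e` are homomorphisms.
When every object is a retract of one in the image of a full functor `G`, the splitting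
monomorphism `d ⟶ G.obj Y` is weakly initial in `d ↓ G`, so that comma category is connected
and `G` is final.
-/

namespace CategoryTheory

theorem isConnected_of_forall_nonempty_hom {J : Type*} [Category J] (j₀ : J)
    (h : ∀ j, Nonempty (j₀ ⟶ j)) : IsConnected J :=
  have : Nonempty J := ⟨j₀⟩
  zigzag_isConnected fun j₁ j₂ => Zigzag.of_inv_hom (h j₁).some (h j₂).some

theorem Functor.final_of_full_of_retract {D E : Type*} [Category D] [Category E] (G : D ⥤ E)
    [G.Full] (h : ∀ X : E, ∃ Y : D, Nonempty (Retract X (G.obj Y))) : G.Final where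
  out X := by
    obtain ⟨Y, ⟨ρ⟩⟩ := h X
    refine isConnected_of_forall_nonempty_hom (StructuredArrow.mk ρ.i) fun f =>
      ⟨StructuredArrow.homMk (G.preimage (ρ.r ≫ f.hom)) ?_⟩
    simp

theorem ObjectProperty.final_ιOfLE_of_retract {E : Type*} [Category E] {P P' : ObjectProperty E}
    (h : P ≤ P') (H : ∀ X, P' X → ∃ Y, P Y ∧ Nonempty (Retract X Y)) : (ιOfLE h).Final :=
  Functor.final_of_full_of_retract _ fun X => by
    obtain ⟨Y, hY, ⟨ρ⟩⟩ := H X.obj X.property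
    exact ⟨⟨Y, hY⟩, ⟨{ i := homMk ρ.i, r := homMk ρ.r, retract := by ext; exact ρ.retract }⟩⟩

namespace Endofunctor.Coalgebra

variable {F : C ⥤ C}

def ofRetract (A : Coalgebra F) {W : C} (ρ : Retract A.V W) : Coalgebra F where
  V := W
  str := ρ.r ≫ A.str ≫ F.map ρ.i

def retractOfRetract (A : Coalgebra F) {W : C} (ρ : Retract A.V W) :
    Retract A (A.ofRetract ρ) where
  i :=
    { f := ρ.i
      h := show A.str ≫ F.map ρ.i = ρ.i ≫ ρ.r ≫ A.str ≫ F.map ρ.i by rw [ρ.retract_assoc] }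
  r :=
    { f := ρ.r
      h := show (ρ.r ≫ A.str ≫ F.map ρ.i) ≫ F.map ρ.r = ρ.r ≫ A.str by
        simp only [Category.assoc, ← F.map_comp, ρ.retract, F.map_id, Category.comp_id] }
  retract := by ext; exact ρ.retract

end Endofunctor.Coalgebra

end CategoryTheory

/-- The inclusion of coalgebras with ffg carrier into coalgebras with perfectly
presentable carrier is cofinal; in particular (1) every coalgebra `(X, c)` with `X` a
split quotient of an ffg object `W` (via `e : W ↠ X`, `m : X ↣ W`) admits the coalgebra
homomorphism `m` into the ffg-coalgebra `w := Fm ∘ c ∘ e`, and (2) `e` is also a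
coalgebra homomorphism from `(W, w)` to `(X, c)`. -/
theorem ffgCoalgebras_final_in_perfectlyPresentableCoalgebras
    (F : C ⥤ C) (FFG : C → Prop) :
    (Functor.Final (ObjectProperty.ιOfLE
      (P := fun c : Endofunctor.Coalgebra F => FFG c.V)
      (P' := fun c : Endofunctor.Coalgebra F => PerfectlyPresentable FFG c.V)
      (fun c hc => ⟨c.V, 𝟙 c.V, 𝟙 c.V, hc, Category.id_comp _⟩))) ∧
    (∀ (X W : C) (c : X ⟶ F.obj X) (e : W ⟶ X) (m : X ⟶ W), m ≫ e = 𝟙 X →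
      (m ≫ (e ≫ c ≫ F.map m) = c ≫ F.map m) ∧
      (e ≫ c = (e ≫ c ≫ F.map m) ≫ F.map e)) := by
  refine ⟨ObjectProperty.final_ιOfLE_of_retract _ fun A ⟨W, e, m, hW, hme⟩ => ?_,
    fun X W c e m hme => ?_⟩
  · let ρ : Retract A.V W := ⟨m, e, hme⟩
    exact ⟨A.ofRetract ρ, hW, ⟨A.retractOfRetract ρ⟩⟩
  · let ρ := Endofunctor.Coalgebra.retractOfRetract ⟨X, c⟩ ⟨m, e, hme⟩
    exact ⟨ρ.i.h.symm, ρ.r.h.symm⟩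
end
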